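/- (Lemma 2.1(vi)) Given two admissible 1D primitive states U⁻ and U⁺ with the HLLC wave speeds s⁻ = min(s_min(U⁻), s_min(U⁺)) and s⁺ = max(s_max(U⁻), s_max(U⁺)), one has 4(A⁻)² - (s⁻A⁻ + B⁻)² > 0 and 4(A⁺)² - (s⁺A⁺ + B⁺)² > 0. -/

import Mathlib

/-!
Write `W = ρhγ²`, so that `E = W - p` and `m = W u`. Then `4A² - (sA + B)²` factors as
`(W(1-u)² - (W-p)(1-s)²) · ((W-p)(1+s)² - W(1+u)²)`. The reflection `u ↦ -u`, `s ↦ -s`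
leaves this product invariant and turns `s_max` into `-s_min`, so it suffices to treat
`-1 < s ≤ s_min(U)`, where both factors are negative. The second is because `s < u` and
`W - p < W`. For the first, `1 - s ≥ (1+c)(1-u)/(1-cu)`, so it is enough that
`(W-p)(1+c)² > W(1-cu)²`; substituting `Γp = c²W(1-u²)` this becomes
`c(1+u)(2Γ + c(1-u)(Γ - (1+c)²)) > 0`, which holds because `c² < Γ - 1` and `c < 1`.
-/

noncomputable section

namespace SRHD1D

/-- Lorentz factor `γ = (1 - u²)^(-1/2)`. -/
def lorentz (u : ℝ) : ℝ := 1 / Real.sqrt (1 - u ^ 2)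

/-- Specific enthalpy `h = 1 + Γ p / ((Γ - 1) ρ)` of a perfect gas. -/
def enthalpy (G r p : ℝ) : ℝ := 1 + G * p / ((G - 1) * r)

/-- Sound speed `c_s = √(Γ p / (ρ h))`. -/
def soundSpeed (G r p : ℝ) : ℝ := Real.sqrt (G * p / (r * enthalpy G r p))

/-- Conserved rest-mass density `D = ρ γ`. -/
def Dc (r u : ℝ) : ℝ := r * lorentz u

/-- Conserved momentum `m = ρ h γ² u`. -/
def mc (G r u p : ℝ) : ℝ := r * enthalpy G r p * lorentz u ^ 2 * u

/-- Conserved total energy `E = ρ h γ² - p`. -/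
def Ec (G r u p : ℝ) : ℝ := r * enthalpy G r p * lorentz u ^ 2 - p

/-- Minimum characteristic speed `s_min = (u - c_s)/(1 - c_s u)`. -/
def sMin (G r u p : ℝ) : ℝ := (u - soundSpeed G r p) / (1 - soundSpeed G r p * u)

/-- Maximum characteristic speed `s_max = (u + c_s)/(1 + c_s u)`. -/
def sMax (G r u p : ℝ) : ℝ := (u + soundSpeed G r p) / (1 + soundSpeed G r p * u)

lemma hllc_disc_eq (W p u s : ℝ) :
    4 * (s * (W - p) - W * u) ^ 2 - (s * (s * (W - p) - W * u) + (W * u * (s - u) - p)) ^ 2 =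
      (W * (1 - u) ^ 2 - (W - p) * (1 - s) ^ 2) * ((W - p) * (1 + s) ^ 2 - W * (1 + u) ^ 2) := by
  ring

lemma mul_one_sub_mul_sq_lt {G W p c u : ℝ} (hc0 : 0 < c) (hc1 : c < 1) (hcG : c ^ 2 < G - 1)
    (hu : |u| < 1) (hW : 0 < W) (hGp : G * p = c ^ 2 * W * (1 - u ^ 2)) :
    W * (1 - c * u) ^ 2 < (W - p) * (1 + c) ^ 2 := by
  obtain ⟨hu1, hu2⟩ := abs_lt.mp hu
  have hG : 0 < G := by nlinarith
  have hfactor : 0 < 2 * G + c * (1 - u) * (G - (1 + c) ^ 2) := by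
    rcases le_or_gt 0 (G - (1 + c) ^ 2) with h | h
    · nlinarith [mul_nonneg (mul_nonneg hc0.le (show (0 : ℝ) ≤ 1 - u by linarith)) h]
    · -- `c(1-u) < 2c` and `c + c² < Γ`
      nlinarith [mul_nonneg (mul_nonneg hc0.le (show (0 : ℝ) ≤ 1 + u by linarith))
        (show (0 : ℝ) ≤ (1 + c) ^ 2 - G by linarith),
        mul_pos hc0 (show (0 : ℝ) < G - 1 - c ^ 2 by linarith)]
  have key : G * ((W - p) * (1 + c) ^ 2 - W * (1 - c * u) ^ 2) =
      W * (c * (1 + u)) * (2 * G + c * (1 - u) * (G - (1 + c) ^ 2)) := by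
    linear_combination (-(1 + c) ^ 2) * hGp
  have hpos : 0 < G * ((W - p) * (1 + c) ^ 2 - W * (1 - c * u) ^ 2) := by
    rw [key]
    exact mul_pos (mul_pos hW (mul_pos hc0 (by linarith))) hfactor
  linarith [(mul_pos_iff_of_pos_left hG).mp hpos]

lemma hllc_disc_factors_pos {W p c u s : ℝ} (hp : 0 < p) (hW : 0 < W) (hc0 : 0 < c)
    (hc1 : c < 1) (hu : |u| < 1) (hE : W * (1 - c * u) ^ 2 < (W - p) * (1 + c) ^ 2)
    (hs1 : -1 < s) (hs : s ≤ (u - c) / (1 - c * u)) :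
    0 < (W * (1 - u) ^ 2 - (W - p) * (1 - s) ^ 2) * ((W - p) * (1 + s) ^ 2 - W * (1 + u) ^ 2) := by
  obtain ⟨hu1, hu2⟩ := abs_lt.mp hu
  have hcu : 0 < 1 - c * u := by nlinarith
  have hs' : s * (1 - c * u) ≤ u - c := (le_div_iff₀ hcu).mp hs
  have hsu : s < u := by nlinarith [mul_pos hc0 (show (0 : ℝ) < 1 - u ^ 2 by nlinarith)]
  have hWp : 0 ≤ W - p := by
    nlinarith [mul_nonneg hW.le (sq_nonneg (1 - c * u)), sq_nonneg (1 + c)]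
  have hshift : (1 + c) * (1 - u) ≤ (1 - s) * (1 - c * u) := by linarith
  have hleft : W * (1 - u) ^ 2 < (W - p) * (1 - s) ^ 2 := by
    refine lt_of_mul_lt_mul_right ?_ (sq_nonneg (1 - c * u))
    calc W * (1 - u) ^ 2 * (1 - c * u) ^ 2
        = W * (1 - c * u) ^ 2 * (1 - u) ^ 2 := by ring
      _ < (W - p) * (1 + c) ^ 2 * (1 - u) ^ 2 :=
          mul_lt_mul_of_pos_right hE (pow_pos (by linarith) 2)
      _ = (W - p) * ((1 + c) * (1 - u)) ^ 2 := by ring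
      _ ≤ (W - p) * ((1 - s) * (1 - c * u)) ^ 2 := by gcongr
      _ = (W - p) * (1 - s) ^ 2 * (1 - c * u) ^ 2 := by ring
  have hright : (W - p) * (1 + s) ^ 2 < W * (1 + u) ^ 2 :=
    calc (W - p) * (1 + s) ^ 2
        ≤ (W - p) * (1 + u) ^ 2 := by gcongr; linarith
      _ < W * (1 + u) ^ 2 := by nlinarith [pow_pos (show (0 : ℝ) < 1 + u by linarith) 2]
  exact mul_pos_of_neg_of_neg (by linarith) (by linarith)

lemma lorentz_pos {u : ℝ} (hu : |u| < 1) : 0 < lorentz u := by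
  have : 0 < 1 - u ^ 2 := by nlinarith [abs_lt.mp hu]
  exact one_div_pos.mpr (Real.sqrt_pos.mpr this)

lemma lorentz_sq_mul_one_sub_sq {u : ℝ} (hu : |u| < 1) : lorentz u ^ 2 * (1 - u ^ 2) = 1 := by
  have : 0 < 1 - u ^ 2 := by nlinarith [abs_lt.mp hu]
  rw [lorentz, div_pow, one_pow, Real.sq_sqrt this.le]
  field_simp

lemma mul_enthalpy_eq {G r p : ℝ} (hG1 : 1 < G) (hr : 0 < r) :
    r * enthalpy G r p = r + G * p / (G - 1) := by
  have : G - 1 ≠ 0 := by linarith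
  rw [enthalpy]
  field_simp

lemma mul_enthalpy_pos {G r p : ℝ} (hG1 : 1 < G) (hr : 0 < r) (hp : 0 < p) :
    0 < r * enthalpy G r p := by
  rw [mul_enthalpy_eq hG1 hr]
  have : 0 < G * p / (G - 1) := div_pos (by nlinarith) (by linarith)
  linarith

lemma soundSpeed_pos {G r p : ℝ} (hG1 : 1 < G) (hr : 0 < r) (hp : 0 < p) :
    0 < soundSpeed G r p :=
  Real.sqrt_pos.mpr (div_pos (by nlinarith) (mul_enthalpy_pos hG1 hr hp))

lemma soundSpeed_sq_mul {G r p : ℝ} (hG1 : 1 < G) (hr : 0 < r) (hp : 0 < p) :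
    soundSpeed G r p ^ 2 * (r * enthalpy G r p) = G * p := by
  have hrh := mul_enthalpy_pos hG1 hr hp
  rw [soundSpeed, Real.sq_sqrt (div_pos (by nlinarith) hrh).le]
  exact div_mul_cancel₀ _ hrh.ne'

lemma soundSpeed_sq_lt {G r p : ℝ} (hG1 : 1 < G) (hr : 0 < r) (hp : 0 < p) :
    soundSpeed G r p ^ 2 < G - 1 := by
  have hrh := mul_enthalpy_pos hG1 hr hp
  have hsq := soundSpeed_sq_mul hG1 hr hp
  have hdecomp : (G - 1) * (r * enthalpy G r p) = (G - 1) * r + G * p := by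
    rw [mul_enthalpy_eq hG1 hr]
    field_simp [show G - 1 ≠ 0 by linarith]
  refine lt_of_mul_lt_mul_right ?_ hrh.le
  nlinarith [mul_pos (show (0 : ℝ) < G - 1 by linarith) hr]

lemma soundSpeed_lt_one {G r p : ℝ} (hG1 : 1 < G) (hG2 : G ≤ 2) (hr : 0 < r) (hp : 0 < p) :
    soundSpeed G r p < 1 := by
  have := soundSpeed_sq_lt hG1 hr hp
  nlinarith [soundSpeed_pos hG1 hr hp]

lemma neg_one_lt_sMin {G r u p : ℝ} (hG1 : 1 < G) (hG2 : G ≤ 2) (hr : 0 < r) (hu : |u| < 1)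
    (hp : 0 < p) : -1 < sMin G r u p := by
  obtain ⟨hu1, hu2⟩ := abs_lt.mp hu
  have hc0 := soundSpeed_pos hG1 hr hp
  have hc1 := soundSpeed_lt_one hG1 hG2 hr hp
  rw [sMin, lt_div_iff₀ (by nlinarith)]
  nlinarith

lemma sMax_lt_one {G r u p : ℝ} (hG1 : 1 < G) (hG2 : G ≤ 2) (hr : 0 < r) (hu : |u| < 1)
    (hp : 0 < p) : sMax G r u p < 1 := by
  obtain ⟨hu1, hu2⟩ := abs_lt.mp hu
  have hc0 := soundSpeed_pos hG1 hr hp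
  have hc1 := soundSpeed_lt_one hG1 hG2 hr hp
  rw [sMax, div_lt_one (by nlinarith)]
  nlinarith

lemma mul_pressure_eq {G r u p : ℝ} (hG1 : 1 < G) (hr : 0 < r) (hu : |u| < 1) (hp : 0 < p) :
    G * p = soundSpeed G r p ^ 2 * (r * enthalpy G r p * lorentz u ^ 2) * (1 - u ^ 2) := by
  linear_combination -(soundSpeed_sq_mul hG1 hr hp) -
    soundSpeed G r p ^ 2 * (r * enthalpy G r p) * lorentz_sq_mul_one_sub_sq hu

lemma hllc_disc_pos_of_le_sMin {G r u p s : ℝ} (hG1 : 1 < G) (hG2 : G ≤ 2) (hr : 0 < r)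
    (hu : |u| < 1) (hp : 0 < p) (hs1 : -1 < s) (hs : s ≤ sMin G r u p) :
    0 < 4 * (s * Ec G r u p - mc G r u p) ^ 2 -
      (s * (s * Ec G r u p - mc G r u p) + (mc G r u p * (s - u) - p)) ^ 2 := by
  have hW := mul_pos (mul_enthalpy_pos hG1 hr hp) (pow_pos (lorentz_pos hu) 2)
  have hc0 := soundSpeed_pos hG1 hr hp
  have hc1 := soundSpeed_lt_one hG1 hG2 hr hp
  have hE := mul_one_sub_mul_sq_lt hc0 hc1 (soundSpeed_sq_lt hG1 hr hp) hu hW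
    (mul_pressure_eq hG1 hr hu hp)
  rw [Ec, mc, hllc_disc_eq]
  exact hllc_disc_factors_pos hp hW hc0 hc1 hu hE hs1 hs

lemma hllc_disc_pos_of_sMax_le {G r u p s : ℝ} (hG1 : 1 < G) (hG2 : G ≤ 2) (hr : 0 < r)
    (hu : |u| < 1) (hp : 0 < p) (hs : sMax G r u p ≤ s) (hs1 : s < 1) :
    0 < 4 * (s * Ec G r u p - mc G r u p) ^ 2 -
      (s * (s * Ec G r u p - mc G r u p) + (mc G r u p * (s - u) - p)) ^ 2 := by
  have hu' : |-u| < 1 := by rwa [abs_neg]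
  have hW := mul_pos (mul_enthalpy_pos hG1 hr hp) (pow_pos (lorentz_pos hu) 2)
  have hc0 := soundSpeed_pos hG1 hr hp
  have hc1 := soundSpeed_lt_one hG1 hG2 hr hp
  have hE := mul_one_sub_mul_sq_lt hc0 hc1 (soundSpeed_sq_lt hG1 hr hp) hu' hW
    (by rw [neg_sq]; exact mul_pressure_eq hG1 hr hu hp)
  have hs' : -s ≤ (-u - soundSpeed G r p) / (1 - soundSpeed G r p * -u) := by
    rw [sMax] at hs
    rw [show -u - soundSpeed G r p = -(u + soundSpeed G r p) by ring, mul_neg, sub_neg_eq_add,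
      neg_div]
    linarith
  rw [Ec, mc, hllc_disc_eq]
  have := hllc_disc_factors_pos hp hW hc0 hc1 hu' hE (by linarith) hs'
  linarith

theorem hllc_discriminant_pos (G r1 u1 p1 r2 u2 p2 sm sp A1 A2 B1 B2 : ℝ)
    (hG1 : 1 < G) (hG2 : G ≤ 2)
    (hr1 : 0 < r1) (hu1 : |u1| < 1) (hp1 : 0 < p1)
    (hr2 : 0 < r2) (hu2 : |u2| < 1) (hp2 : 0 < p2)
    (hsm : sm = min (sMin G r1 u1 p1) (sMin G r2 u2 p2))
    (hsp : sp = max (sMax G r1 u1 p1) (sMax G r2 u2 p2))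
    (hA1 : A1 = sm * Ec G r1 u1 p1 - mc G r1 u1 p1)
    (hA2 : A2 = sp * Ec G r2 u2 p2 - mc G r2 u2 p2)
    (hB1 : B1 = mc G r1 u1 p1 * (sm - u1) - p1)
    (hB2 : B2 = mc G r2 u2 p2 * (sp - u2) - p2)
    :
    0 < 4 * A1 ^ 2 - (sm * A1 + B1) ^ 2 ∧ 0 < 4 * A2 ^ 2 - (sp * A2 + B2) ^ 2 := by
  subst hA1 hA2 hB1 hB2
  have hsm1 : -1 < sm := hsm ▸ lt_min (neg_one_lt_sMin hG1 hG2 hr1 hu1 hp1)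
    (neg_one_lt_sMin hG1 hG2 hr2 hu2 hp2)
  have hsp1 : sp < 1 := hsp ▸ max_lt (sMax_lt_one hG1 hG2 hr1 hu1 hp1)
    (sMax_lt_one hG1 hG2 hr2 hu2 hp2)
  exact ⟨hllc_disc_pos_of_le_sMin hG1 hG2 hr1 hu1 hp1 hsm1 (hsm ▸ min_le_left _ _),
    hllc_disc_pos_of_sMax_le hG1 hG2 hr2 hu2 hp2 (hsp ▸ le_max_right _ _) hsp1⟩

end SRHD1D
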